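/- arXiv:1704.04332 — 2 statements merged into one kernel-verified Lean document; each statement's English description precedes it below -/
import Mathlib

section
/- Let a <= b be real numbers, let p : I -> R be a finite family of points with p(i) in the closed interval [a, b] for all i in I, let w : I -> R be nonnegative weights with total weight W equal to the sum of w(i) over i in I, and let r be a real number with (b-a)/2 <= r <= b-a. Then there exists c with a <= c and c + r <= b such that the sum of w(i) over those i with p(i) in the closed interval [c, c+r] is at least W/2. -/
/-! A window of length `r ≥ (b - a) / 2` placed at either end of `[a, b]` leaves no gap between
the two placements, so the two windows together carry all the weight and one of them at least
half of it. -/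

open Finset

theorem Finset.sum_le_sum_filter_add_sum_filter {ι M : Type*} [AddCommMonoid M] [PartialOrder M]
    [IsOrderedAddMonoid M] (s : Finset ι) (f : ι → M) (P Q : ι → Prop) [DecidablePred P]
    [DecidablePred Q] (hf : ∀ i ∈ s, 0 ≤ f i) (hPQ : ∀ i ∈ s, P i ∨ Q i) :
    ∑ i ∈ s, f i ≤ ∑ i ∈ s with P i, f i + ∑ i ∈ s with Q i, f i := by
  rw [← sum_filter_add_sum_filter_not s P f]
  gcongr with i hi
  · exact fun i hi _ => hf i (mem_of_mem_filter i hi)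
  · exact (hPQ i hi).resolve_left

theorem Set.mem_Icc_or_mem_Icc_of_mem_Icc {α : Type*} [AddCommGroup α] [LinearOrder α]
    [IsOrderedAddMonoid α] {a b r x : α} (h : b - r ≤ a + r) (hx : x ∈ Set.Icc a b) :
    x ∈ Set.Icc a (a + r) ∨ x ∈ Set.Icc (b - r) b := by
  rcases le_total x (a + r) with hxr | hxr
  · exact Or.inl ⟨hx.1, hxr⟩
  · exact Or.inr ⟨h.trans hxr, hx.2⟩

theorem stmt5_general {I : Type*} [Fintype I] (a b : ℝ)
    (p : I → ℝ) (hp : ∀ i, p i ∈ Set.Icc a b)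
    (w : I → ℝ) (hw : ∀ i, 0 ≤ w i) (W : ℝ) (hW : W = ∑ i, w i)
    (r : ℝ) (hr1 : (b - a) / 2 ≤ r) (hr2 : r ≤ b - a) :
    ∃ c : ℝ, a ≤ c ∧ c + r ≤ b ∧
      W / 2 ≤ ∑ i ∈ Finset.univ.filter (fun i => p i ∈ Set.Icc c (c + r)), w i := by
  have hcover : ∀ i ∈ univ, p i ∈ Set.Icc a (a + r) ∨ p i ∈ Set.Icc (b - r) (b - r + r) :=
    fun i _ => by
      rw [sub_add_cancel]
      exact Set.mem_Icc_or_mem_Icc_of_mem_Icc (by linarith) (hp i)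
  have hsplit := sum_le_sum_filter_add_sum_filter univ w _ _ (fun i _ => hw i) hcover
  by_cases hleft : W / 2 ≤ ∑ i ∈ univ with p i ∈ Set.Icc a (a + r), w i
  · exact ⟨a, le_rfl, by linarith, hleft⟩
  · exact ⟨b - r, by linarith, by linarith, by linarith⟩

/-- Single-sensor half-weight claim: for weighted points in `[a, b]` and a
covering range `r` with `(b-a)/2 ≤ r ≤ b-a`, some subinterval `[c, c+r]` of
`[a, b]` covers at least half the total weight. -/
theorem stmt5 {I : Type*} [Fintype I] (a b : ℝ) (hab : a ≤ b)
    (p : I → ℝ) (hp : ∀ i, p i ∈ Set.Icc a b)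
    (w : I → ℝ) (hw : ∀ i, 0 ≤ w i) (W : ℝ) (hW : W = ∑ i, w i)
    (r : ℝ) (hr1 : (b - a) / 2 ≤ r) (hr2 : r ≤ b - a) :
    ∃ c : ℝ, a ≤ c ∧ c + r ≤ b ∧
      W / 2 ≤ ∑ i ∈ Finset.univ.filter (fun i => p i ∈ Set.Icc c (c + r)), w i :=
  stmt5_general a b p hp w hw W hW r hr1 hr2
end

section
/- Let v > 0, T > 0 and L > 0 be real numbers and let f : R -> R be Lipschitz with constant v. Suppose that for every real t there exist u1 and u2 with t <= u1 <= t + T, t <= u2 <= t + T, f(u1) = 0 and f(u2) = L. Then L <= v*T/2. -/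
/-! The window of length `T` centred at a time `a` with `f a = 0` contains a time `u` with
`f u = L`, and `|u - a| ≤ T / 2`, so `L ≤ |f u - f a| ≤ v * T / 2`. -/

theorem stmt17_general (v T L : ℝ) (hv : 0 < v)
    (f : ℝ → ℝ) (hlip : ∀ s t : ℝ, |f s - f t| ≤ v * |s - t|)
    (hvisit : ∀ t : ℝ, (∃ u1, t ≤ u1 ∧ u1 ≤ t + T ∧ f u1 = 0) ∧
                        (∃ u2, t ≤ u2 ∧ u2 ≤ t + T ∧ f u2 = L)) :
    L ≤ v * T / 2 := by
  have hf : LipschitzWith ⟨v, hv.le⟩ f :=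
    LipschitzWith.of_dist_le_mul fun s t => by
      rw [Real.dist_eq, Real.dist_eq]; exact hlip s t
  obtain ⟨a, -, -, ha⟩ := (hvisit 0).1
  obtain ⟨u, hau, hua, hu⟩ := (hvisit (a - T / 2)).2
  have hdist : dist u a ≤ T / 2 := by
    rw [Real.dist_eq, abs_sub_le_iff]; constructor <;> linarith
  calc L ≤ dist (f u) (f a) := by rw [hu, ha, Real.dist_eq, sub_zero]; exact le_abs_self L
    _ ≤ v * (T / 2) := hf.dist_le_mul_of_le hdist
    _ = v * T / 2 := by ring

/-- The covering range of a single sensor with maximum speed `v` and sweep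
period `T` is at most `v*T/2`: if a `v`-Lipschitz trajectory `f` visits both
`0` and `L` within every time window of length `T`, then `L ≤ v*T/2`. -/
theorem stmt17 (v T L : ℝ) (hv : 0 < v) (hT : 0 < T) (hL : 0 < L)
    (f : ℝ → ℝ) (hlip : ∀ s t : ℝ, |f s - f t| ≤ v * |s - t|)
    (hvisit : ∀ t : ℝ, (∃ u1, t ≤ u1 ∧ u1 ≤ t + T ∧ f u1 = 0) ∧
                        (∃ u2, t ≤ u2 ∧ u2 ≤ t + T ∧ f u2 = L)) :
    L ≤ v * T / 2 :=
  stmt17_general v T L hv f hlip hvisit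
end
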